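/- Let κ, ρ ∈ (0,1) and q ≥ 0, and set ξ' = (κ + ρ + 2q)/(1−κ). Let S, d ∈ ℝ with |d| ≤ q, and set S⁺ = (1−κ)S − (κ+ρ+q)·sgn(S) + d, where sgn denotes the real sign function (sgn 0 = 0). If S > ξ' then 0 < S⁺ < S, and if S < −ξ' then S < S⁺ < 0. -/

import Mathlib

open Set

noncomputable def slidingStep (κ ρ q d S : ℝ) : ℝ :=
  (1 - κ) * S - (κ + ρ + q) * Real.sign S + d

lemma slidingStep_neg (κ ρ q d S : ℝ) :
    slidingStep κ ρ q (-d) (-S) = -slidingStep κ ρ q d S := by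
  simp only [slidingStep, Real.sign_neg]
  ring

lemma slidingStep_mem_Ioo_of_lt {κ ρ q d S : ℝ} (hκ : κ ∈ Ioo 0 1) (hρ : 0 < ρ)
    (hd : |d| ≤ q) (hS : (κ + ρ + 2 * q) / (1 - κ) < S) :
    slidingStep κ ρ q d S ∈ Ioo 0 S := by
  obtain ⟨hκ0, hκ1⟩ := hκ
  obtain ⟨hd_lower, hd_upper⟩ := abs_le.mp hd
  have hband : κ + ρ + 2 * q < (1 - κ) * S := by
    rw [div_lt_iff₀ (by linarith)] at hS
    linarith
  have hS_pos : 0 < S := by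
    have hq : 0 ≤ q := (abs_nonneg d).trans hd
    exact pos_of_mul_pos_right (by linarith) (by linarith : 0 ≤ 1 - κ)
  rw [slidingStep, Real.sign_of_pos hS_pos, mul_one]
  constructor
  · linarith
  · linarith [mul_pos hκ0 hS_pos]

theorem stmt_11_general (κ ρ q : ℝ) (hκ : κ ∈ Set.Ioo (0 : ℝ) 1) (hρ : ρ ∈ Set.Ioo (0 : ℝ) 1)
    (ξ' : ℝ) (hξ' : ξ' = (κ + ρ + 2 * q) / (1 - κ))
    (S d : ℝ) (hd : |d| ≤ q)
    (Splus : ℝ) (hSplus : Splus = (1 - κ) * S - (κ + ρ + q) * Real.sign S + d) :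
    (S > ξ' → 0 < Splus ∧ Splus < S) ∧ (S < -ξ' → S < Splus ∧ Splus < 0) := by
  change Splus = slidingStep κ ρ q d S at hSplus
  subst hSplus hξ'
  refine ⟨slidingStep_mem_Ioo_of_lt hκ hρ.1 hd, fun hS => ?_⟩
  have hreflected := slidingStep_mem_Ioo_of_lt hκ hρ.1 (q := q) (d := -d) (S := -S)
    (by rwa [abs_neg]) (by linarith)
  rw [slidingStep_neg] at hreflected
  exact ⟨by linarith [hreflected.2], by linarith [hreflected.1]⟩

/-- sign preservation and strict decrease outside the band
`ξ' = (κ + ρ + 2q)/(1-κ)` (Eqs. 61–62): with `S⁺ = (1-κ)S - (κ+ρ+q)·sgn(S) + d`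
and `|d| ≤ q`, if `S > ξ'` then `0 < S⁺ < S`, and if `S < -ξ'` then `S < S⁺ < 0`. -/
theorem stmt_11 (κ ρ q : ℝ) (hκ : κ ∈ Set.Ioo (0 : ℝ) 1) (hρ : ρ ∈ Set.Ioo (0 : ℝ) 1)
    (hq : 0 ≤ q)
    (ξ' : ℝ) (hξ' : ξ' = (κ + ρ + 2 * q) / (1 - κ))
    (S d : ℝ) (hd : |d| ≤ q)
    (Splus : ℝ) (hSplus : Splus = (1 - κ) * S - (κ + ρ + q) * Real.sign S + d) :
    (S > ξ' → 0 < Splus ∧ Splus < S) ∧ (S < -ξ' → S < Splus ∧ Splus < 0) :=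
  stmt_11_general κ ρ q hκ hρ ξ' hξ' S d hd Splus hSplus
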